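/- arXiv:2209.02760 — 4 statements merged into one kernel-verified Lean document; each statement's English description precedes it below -/
import Mathlib

section
/- Let n ≥ 4, identify W_3 with the subgroup ⟨x_1, x_2, x_3⟩ of W_n, and let F be a characteristic finite-index subgroup of W_3. Equip the direct product F^{n−3} with the diagonal Aut(W_3)-action φ·(w_4, …, w_n) = (φ(w_4), …, φ(w_n)) (well defined since F is characteristic). Then the map sending ((w_4, …, w_n), φ) ∈ F^{n−3} ⋊ Aut(W_3) to the endomorphism Φ of W_n determined by Φ(x_i) = φ(x_i) for 1 ≤ i ≤ 3 and Φ(x_i) = w_i⁻¹ x_i w_i for 4 ≤ i ≤ n is a well-defined injective group homomorphism from F^{n−3} ⋊ Aut(W_3) into Aut(W_n); in particular each such Φ is an automorphism of W_n. -/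
/-- Relations of the free Coxeter group: each generator squares to the identity. -/
def coxeterRels (n : ℕ) : Set (FreeGroup (Fin n)) := Set.range fun i => (FreeGroup.of i) ^ 2

/-- The free Coxeter group of rank `n`, i.e. the free product of `n` copies of `ℤ/2ℤ`. -/
abbrev W (n : ℕ) : Type := PresentedGroup (coxeterRels n)

/-- The standard order-2 generators `x_1, …, x_n` of `W n` (here indexed by `Fin n`). -/
def x (n : ℕ) (i : Fin n) : W n := PresentedGroup.of i

/-- The subgroup of inner automorphisms of a group. -/
def Inn (G : Type*) [Group G] : Subgroup (MulAut G) := (MulAut.conj : G →* MulAut G).range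

instance Inn.normal (G : Type*) [Group G] : (Inn G).Normal := by
  constructor
  rintro - ⟨g, rfl⟩ φ
  refine ⟨φ g, ?_⟩
  ext y
  simp [MulAut.conj]

/-- The outer automorphism group `Aut(G)/Inn(G)`. -/
abbrev Out (G : Type*) [Group G] : Type _ := MulAut G ⧸ Inn G
/-- Extension of an automorphism of `M` to the diagonal automorphism of `ι → M`. -/
def diagAut (ι : Type*) (M : Type*) [Group M] : MulAut M →* MulAut (ι → M) where
  toFun e := MulEquiv.piCongrRight fun _ => e
  map_one' := by ext; rfl
  map_mul' e₁ e₂ := by ext; rfl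
/-- Restriction of automorphisms to a characteristic subgroup. -/
noncomputable def charRestrict {H : Type*} [Group H] (F : Subgroup H)
    (hF : F.Characteristic) : MulAut H →* MulAut ↥F where
  toFun e := (e.subgroupMap F).trans (MulEquiv.subgroupCongr (by
    rw [Subgroup.map_equiv_eq_comap_symm]
    exact hF.fixed e.symm))
  map_one' := by ext; rfl
  map_mul' e₁ e₂ := by ext; rfl
/-- The copy of `W 3` inside `W n` generated by the first three standard generators. -/
def W3sub (n : ℕ) : Subgroup (W n) :=
  Subgroup.closure {g | ∃ i : Fin n, (i : ℕ) < 3 ∧ g = x n i}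

/-
The automorphism `Φ` attached to `((w_j), φ)` is the endomorphism of the presented group
`W n` sending `x_i` to `φ(x_i)` or `w_i⁻¹ x_i w_i`; these images are involutions, so `Φ` is well
defined, and a direct computation on generators shows that `((w_j), φ) ↦ Φ` is multiplicative for
the semidirect product law, hence lands in `Aut(W n)`.

If `Φ = id`, then `φ` fixes `x_1, x_2, x_3`, so `φ = 1`, and every `w_i` is an element of
`⟨x_1, x_2, x_3⟩` commuting with `x_i`, `i ≥ 4`. Such an element is trivial: sending `x_i` to the
swap of `W n ⊕ W n` and every other generator `x_j` to left multiplication by `x_j` on the first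
summand gives a representation of `W n` in which an element `g ∈ ⟨x_j : j ≠ i⟩` acts by left
multiplication by `g` on the first summand only, and this commutes with the swap only if `g = 1`.
-/

def MonoidHom.toMulAut {G M : Type*} [Group G] [Monoid M] (f : G →* Monoid.End M) :
    G →* MulAut M where
  toFun g := (f g).toMulEquiv (f g⁻¹)
    (show f g⁻¹ * f g = 1 by rw [← map_mul, inv_mul_cancel, map_one])
    (show f g * f g⁻¹ = 1 by rw [← map_mul, mul_inv_cancel, map_one])
  map_one' := MulEquiv.ext fun m => DFunLike.congr_fun (map_one f) m
  map_mul' g h := MulEquiv.ext fun m => DFunLike.congr_fun (map_mul f g h) m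

theorem MonoidHom.toMulAut_injective {G M : Type*} [Group G] [Monoid M] {f : G →* Monoid.End M}
    (hf : Function.Injective f) : Function.Injective f.toMulAut :=
  fun _ _ e => hf (MonoidHom.ext fun m => DFunLike.congr_fun e m)

namespace FreeCoxeter

variable {n : ℕ}

theorem x_sq (i : Fin n) : x n i ^ 2 = 1 := by
  change PresentedGroup.mk _ (FreeGroup.of i) ^ 2 = 1
  rw [← map_pow]
  exact (QuotientGroup.eq_one_iff _).2 (Subgroup.subset_normalClosure ⟨i, rfl⟩)

def lift {G : Type*} [Group G] (f : Fin n → G) (hf : ∀ i, f i ^ 2 = 1) : W n →* G :=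
  PresentedGroup.toGroup (by rintro - ⟨i, rfl⟩; simpa using hf i)

@[simp]
theorem lift_x {G : Type*} [Group G] (f : Fin n → G) (hf : ∀ i, f i ^ 2 = 1) (i : Fin n) :
    lift f hf (x n i) = f i :=
  PresentedGroup.toGroup.of _

theorem hom_ext {G : Type*} [Group G] {f g : W n →* G} (h : ∀ i, f (x n i) = g (x n i)) :
    f = g :=
  PresentedGroup.ext h

theorem eq_one_of_mem_closure_of_commute {i : Fin n} {g : W n}
    (hg : g ∈ Subgroup.closure (x n '' {i}ᶜ)) (hc : Commute g (x n i)) : g = 1 := by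
  let σ : W n →* Equiv.Perm (W n ⊕ W n) := (Equiv.Perm.sumCongrHom _ _).comp
    ((MonoidHom.inl _ _).comp (MulAction.toPermHom (W n) (W n)))
  let ψ : W n →* Equiv.Perm (W n ⊕ W n) :=
    lift (fun j => if j = i then Equiv.sumComm _ _ else σ (x n j)) fun j => by
      split_ifs
      · ext (_ | _) <;> rfl
      · rw [← map_pow, x_sq, map_one]
  have hψσ : ψ g = σ g := MonoidHom.eqOn_closure (by
    rintro - ⟨j, hj, rfl⟩
    simp [ψ, Set.mem_compl_singleton_iff.1 hj]) hg
  have hcomm := congrArg (· (Sum.inr 1)) (hc.map ψ).eq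
  rw [hψσ] at hcomm
  simpa [ψ, σ] using hcomm

theorem x_mem_W3sub {i : Fin n} (hi : (i : ℕ) < 3) : x n i ∈ W3sub n :=
  Subgroup.subset_closure ⟨i, hi, rfl⟩

theorem W3sub_le_closure {i : Fin n} (hi : 3 ≤ (i : ℕ)) :
    W3sub n ≤ Subgroup.closure (x n '' {i}ᶜ) :=
  Subgroup.closure_mono <| by
    rintro - ⟨j, hj, rfl⟩
    exact ⟨j, fun h => by subst h; omega, rfl⟩

section Embedding

variable {F : Subgroup (W3sub n)} (hchar : F.Characteristic)

@[simp]
theorem coe_charRestrict_apply (φ : MulAut (W3sub n)) (v : F) :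
    ((charRestrict F hchar φ v : F) : W3sub n) = φ v :=
  rfl

def phiGen (w : Fin (n - 3) → F) (φ : MulAut (W3sub n)) (i : Fin n) : W n :=
  if h : (i : ℕ) < 3 then φ ⟨x n i, x_mem_W3sub h⟩
  else
    (((w ⟨(i : ℕ) - 3, by omega⟩ : F) : W3sub n) : W n)⁻¹ * x n i *
      (((w ⟨(i : ℕ) - 3, by omega⟩ : F) : W3sub n) : W n)

theorem phiGen_sq (w : Fin (n - 3) → F) (φ : MulAut (W3sub n)) (i : Fin n) :
    phiGen w φ i ^ 2 = 1 := by
  unfold phiGen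
  split_ifs with h
  · rw [← Subgroup.coe_pow, ← map_pow]
    have : (⟨x n i, x_mem_W3sub h⟩ : W3sub n) ^ 2 = 1 := Subtype.ext (x_sq i)
    simp [this]
  · set c : W n := (((w ⟨(i : ℕ) - 3, by omega⟩ : F) : W3sub n) : W n)
    have hconj : c⁻¹ * x n i * c = MulAut.conj c⁻¹ (x n i) := by simp
    rw [hconj, ← map_pow, x_sq, map_one]

def phi (w : Fin (n - 3) → F) (φ : MulAut (W3sub n)) : W n →* W n :=
  lift (phiGen w φ) (phiGen_sq w φ)

theorem phi_x (w : Fin (n - 3) → F) (φ : MulAut (W3sub n)) (i : Fin n) :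
    phi w φ (x n i) = phiGen w φ i :=
  lift_x _ _ i

theorem phi_apply_of_mem (w : Fin (n - 3) → F) (φ : MulAut (W3sub n)) (g : W3sub n) :
    phi w φ g = φ g := by
  have : (phi w φ).comp (W3sub n).subtype = (W3sub n).subtype.comp φ.toMonoidHom :=
    MonoidHom.eq_of_eqOn_dense Subgroup.closure_closure_coe_preimage <| by
      rintro ⟨-, hg⟩ ⟨i, hi, rfl⟩
      change phi w φ (x n i) = φ ⟨x n i, hg⟩
      rw [phi_x, phiGen, dif_pos hi]
  exact DFunLike.congr_fun this g

theorem phi_one : phi (1 : Fin (n - 3) → F) 1 = MonoidHom.id (W n) :=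
  hom_ext fun i => by
    by_cases h : (i : ℕ) < 3 <;> simp [phi_x, phiGen, h]

theorem phi_mul (w w' : Fin (n - 3) → F) (φ φ' : MulAut (W3sub n)) :
    phi (w * fun j => charRestrict F hchar φ (w' j)) (φ * φ') = (phi w φ).comp (phi w' φ') :=
  hom_ext fun i => by
    by_cases h : (i : ℕ) < 3
    · simp [phi_x, phiGen, h, phi_apply_of_mem]
    · simp [phi_x, phiGen, h, phi_apply_of_mem, mul_assoc]

def phiEnd : ((Fin (n - 3) → F) ⋊[(diagAut (Fin (n - 3)) F).comp (charRestrict F hchar)]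
    MulAut (W3sub n)) →* Monoid.End (W n) where
  toFun p := phi p.left p.right
  map_one' := phi_one
  map_mul' p q := phi_mul hchar p.left q.left p.right q.right

theorem phiEnd_injective : Function.Injective (phiEnd hchar) := by
  refine (injective_iff_map_eq_one _).2 fun p hp => ?_
  have hfix (g : W n) : phi p.left p.right g = g := DFunLike.congr_fun hp g
  have hright : p.right = 1 :=
    MulEquiv.ext fun g => Subtype.ext ((phi_apply_of_mem _ _ g).symm.trans (hfix g))
  have hleft : p.left = 1 := by
    funext j
    have hi : (j : ℕ) + 3 < n := by omega
    set c : W n := (((p.left j : F) : W3sub n) : W n)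
    have hconj : c⁻¹ * x n ⟨j + 3, hi⟩ * c = x n ⟨j + 3, hi⟩ := by
      simpa [phi_x, phiGen] using hfix (x n ⟨j + 3, hi⟩)
    have hc : c = 1 := eq_one_of_mem_closure_of_commute
      (W3sub_le_closure (Nat.le_add_left 3 j) (p.left j : W3sub n).2)
      (by rwa [mul_assoc, inv_mul_eq_iff_eq_mul, eq_comm] at hconj)
    exact Subtype.ext (Subtype.ext hc)
  exact SemidirectProduct.ext hleft hright

end Embedding

end FreeCoxeter

/-- Let `n ≥ 4`, let `F` be a characteristic finite-index subgroup of the copy of `W 3` in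
`W n`. The map sending `((w_4, …, w_n), φ)` to the automorphism `Φ` of `W n` with
`Φ(x_i) = φ(x_i)` for `i ≤ 3` and `Φ(x_i) = w_i⁻¹ x_i w_i` for `i ≥ 4` gives a well-defined
injective homomorphism `F^{n-3} ⋊ Aut(W 3) → Aut(W n)` (with the diagonal action). -/
theorem exists_embedding_into_aut (n : ℕ)
    (F : Subgroup ↥(W3sub n)) (hchar : F.Characteristic) :
    ∃ Θ : ((Fin (n - 3) → ↥F)
            ⋊[(diagAut (Fin (n - 3)) ↥F).comp (charRestrict F hchar)] MulAut ↥(W3sub n))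
          →* MulAut (W n),
      Function.Injective Θ ∧
        ∀ p,
          (∀ i : Fin n, ∀ h : (i : ℕ) < 3,
            (Θ p) (x n i) =
              ((p.right ⟨x n i, Subgroup.subset_closure ⟨i, h, rfl⟩⟩ : ↥(W3sub n)) : W n)) ∧
          (∀ i : Fin n, ∀ h : 3 ≤ (i : ℕ),
            (Θ p) (x n i) =
              (((p.left ⟨(i : ℕ) - 3, by omega⟩ : ↥F) : ↥(W3sub n)) : W n)⁻¹ * x n i *
                (((p.left ⟨(i : ℕ) - 3, by omega⟩ : ↥F) : ↥(W3sub n)) : W n)) := by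
  open FreeCoxeter in
  refine ⟨(phiEnd hchar).toMulAut, MonoidHom.toMulAut_injective (phiEnd_injective hchar),
    fun p => ⟨fun i h => ?_, fun i h => ?_⟩⟩
  · exact (phi_x _ _ i).trans (dif_pos h)
  · exact (phi_x _ _ i).trans (dif_neg (by omega))
end

section
/- Let n ≥ 4 and identify W_3 with the subgroup ⟨x_1, x_2, x_3⟩ of W_n. Let φ ∈ Aut(W_3) and w_4, …, w_n ∈ W_3, and let Φ be the automorphism of W_n determined by Φ(x_i) = φ(x_i) for 1 ≤ i ≤ 3 and Φ(x_i) = w_i⁻¹ x_i w_i for 4 ≤ i ≤ n. If φ is not an inner automorphism of W_3, then Φ is not an inner automorphism of W_n (i.e. Φ has nontrivial image in Out(W_n)). -/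
/-!
Killing the generators `x_i` with `i > 3` defines a retraction `r` of `W_n` onto
`⟨x_1, x_2, x_3⟩`. If `Φ` were conjugation by `g`, then `φ y = g y g⁻¹` for every `y` in the
retract; as `φ y` lies in the retract, applying `r` gives `φ y = r(g) y r(g)⁻¹`, so `φ` would
be inner.
-/

section Retract

variable {G : Type*} [Group G]

theorem MulAut.coe_apply_eq_conj_of_closure {S : Set G} (φ : MulAut (Subgroup.closure S))
    (g : G) (hS : ∀ s (hs : s ∈ S), (φ ⟨s, Subgroup.subset_closure hs⟩ : G) = g * s * g⁻¹)
    (y : Subgroup.closure S) : (φ y : G) = g * y * g⁻¹ := by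
  have h : (Subgroup.closure S).subtype.comp φ.toMonoidHom =
      (MulAut.conj g).toMonoidHom.comp (Subgroup.closure S).subtype :=
    MonoidHom.eq_of_eqOn_dense Subgroup.closure_closure_coe_preimage fun s hs => hS s hs
  exact DFunLike.congr_fun h y

theorem MulAut.eq_conj_of_retraction {H : Subgroup G} (r : G →* H) (hr : ∀ h : H, r h = h)
    (φ : MulAut H) (g : G) (hφ : ∀ h : H, (φ h : G) = g * h * g⁻¹) :
    φ = MulAut.conj (r g) := by
  refine MulEquiv.ext fun h => ?_
  calc φ h = r (φ h) := (hr _).symm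
    _ = r g * h * (r g)⁻¹ := by rw [hφ, map_mul, map_mul, map_inv, hr]
    _ = MulAut.conj (r g) h := (MulAut.conj_apply _ _).symm

end Retract

namespace W

variable {n : ℕ}

theorem x_mul_self (i : Fin n) : x n i * x n i = 1 := by
  have h : PresentedGroup.mk (coxeterRels n) (FreeGroup.of i ^ 2) = 1 :=
    (QuotientGroup.eq_one_iff _).2 (Subgroup.subset_normalClosure ⟨i, rfl⟩)
  simpa [sq, x, PresentedGroup.of] using h

variable (p : Fin n → Prop) [DecidablePred p]

def retraction : W n →* Subgroup.closure {g | ∃ i, p i ∧ g = x n i} :=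
  PresentedGroup.toGroup
    (f := fun i => if hi : p i then ⟨x n i, Subgroup.subset_closure ⟨i, hi, rfl⟩⟩ else 1)
    (by
      rintro - ⟨i, rfl⟩
      by_cases hi : p i
      · simp [hi, sq, ← Subtype.val_inj, x_mul_self]
      · simp [hi])

theorem retraction_apply_coe (h : Subgroup.closure {g | ∃ i, p i ∧ g = x n i}) :
    retraction p h = h := by
  have hfix : Set.EqOn ((Subgroup.closure _).subtype.comp (retraction p)) (MonoidHom.id (W n))
      {g | ∃ i, p i ∧ g = x n i} := by
    rintro - ⟨i, hi, rfl⟩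
    change (retraction p (x n i) : W n) = x n i
    rw [retraction, x, PresentedGroup.toGroup.of, dif_pos hi]
    rfl
  exact Subtype.ext (MonoidHom.eqOn_closure hfix h.2)

end W

theorem not_inner_of_not_inner_general (n : ℕ)
    (φ : MulAut ↥(W3sub n)) (Φ : MulAut (W n))
    (h1 : ∀ i : Fin n, ∀ h : (i : ℕ) < 3,
      Φ (x n i) = ((φ ⟨x n i, Subgroup.subset_closure ⟨i, h, rfl⟩⟩ : ↥(W3sub n)) : W n))
    (hφ : ¬ ∃ g : ↥(W3sub n), φ = MulAut.conj g) :
    ¬ ∃ g : W n, Φ = MulAut.conj g := by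
  rintro ⟨g, rfl⟩
  have hconj : ∀ y : W3sub n, (φ y : W n) = g * y * g⁻¹ :=
    MulAut.coe_apply_eq_conj_of_closure φ g fun _ ⟨i, hi, hs⟩ => hs ▸ (h1 i hi).symm
  exact hφ ⟨W.retraction (fun i => (i : ℕ) < 3) g,
    MulAut.eq_conj_of_retraction _ (W.retraction_apply_coe _) φ g hconj⟩

/-- Let `n ≥ 4`, `φ` an automorphism of the copy of `W 3` in `W n`, and `Φ` an automorphism
of `W n` with `Φ(x_i) = φ(x_i)` for `i ≤ 3` and `Φ(x_i) = w_i⁻¹ x_i w_i` (with `w_i ∈ W 3`)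
for `i ≥ 4`. If `φ` is not inner, then `Φ` is not inner. -/
theorem not_inner_of_not_inner (n : ℕ) (hn : 4 ≤ n)
    (φ : MulAut ↥(W3sub n)) (w : Fin n → ↥(W3sub n)) (Φ : MulAut (W n))
    (h1 : ∀ i : Fin n, ∀ h : (i : ℕ) < 3,
      Φ (x n i) = ((φ ⟨x n i, Subgroup.subset_closure ⟨i, h, rfl⟩⟩ : ↥(W3sub n)) : W n))
    (h2 : ∀ i : Fin n, 3 ≤ (i : ℕ) →
      Φ (x n i) = (w i : W n)⁻¹ * x n i * (w i : W n))
    (hφ : ¬ ∃ g : ↥(W3sub n), φ = MulAut.conj g) :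
    ¬ ∃ g : W n, Φ = MulAut.conj g :=
  not_inner_of_not_inner_general n φ Φ h1 hφ
end

section
/- There exists a subgroup H of Aut(W_3) such that H is a free group of rank 2 and H ∩ Inn(W_3) = {1}; equivalently, the restriction to H of the canonical projection Aut(W_3) → Out(W_3) is injective. In particular, Out(W_3) contains a free subgroup of rank 2. -/
/-!
`W 3` acts on `ℤ²` (`ρ = standardRep`) through the point reflections `v ↦ t - v` at
`t = 0, e₀, e₁`. Under `ρ`, the partial conjugation that fixes two generators and conjugates the
remaining one by the translation `(x_{i+1} x₀)²` becomes conjugation by the transvection with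
entry `4` in position `(i, 1 - i)`; by ping-pong on cones of `ℤ² \ {0}`, these transvections
generate a free group `σ(F₂)` (Sanov). If a word `u` in the two automorphisms is conjugation by
`w`, then `σ(u)` and `ρ(w)` induce the same conjugation on the image of `ρ`, whose centralizer
among affine maps is trivial. Hence `σ(u) = ρ(w)` has linear part `±1`; as `σ(u) ≡ 1 mod 4`,
`σ(u) = 1` and `u = 1`.
-/

open Matrix
open scoped MatrixGroups

section Sanov

lemma fin_two_ne_rev (i : Fin 2) : i ≠ i.rev := by
  revert i; decide

lemma fin_two_eq_or_eq_rev (i j : Fin 2) : j = i ∨ j = i.rev := by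
  revert i j; decide

def nonzeroSubMulAction (G V : Type*) [Group G] [AddMonoid V] [DistribMulAction G V] :
    SubMulAction G V where
  carrier := {v | v ≠ 0}
  smul_mem' g _ hv := (smul_ne_zero_iff_ne g).mpr hv

namespace Matrix.SpecialLinearGroup

variable {ι R : Type*} [DecidableEq ι] [Fintype ι] [CommRing R]

lemma transvection_smul_apply_self {i j : ι} (hij : i ≠ j) (b : R) (v : ι → R) :
    (transvection hij b • v) i = v i + b * v j := by
  simp [SpecialLinearGroup.smul_def, transvection_coe, add_mulVec, single_mulVec]

lemma transvection_smul_apply_of_ne {i j l : ι} (hij : i ≠ j) (hl : l ≠ i) (b : R) (v : ι → R) :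
    (transvection hij b • v) l = v l := by
  simp [SpecialLinearGroup.smul_def, transvection_coe, add_mulVec, single_mulVec, hl]

end Matrix.SpecialLinearGroup

lemma sq_lt_sq_add_mul_and_nonneg {k p q : ℤ} (hk : 3 ≤ k) (hpq : p ≠ 0 ∨ q ≠ 0)
    (h : q ^ 2 < p ^ 2 → 0 ≤ p * q) : q ^ 2 < (p + k * q) ^ 2 ∧ 0 ≤ (p + k * q) * q := by
  rcases eq_or_ne q 0 with rfl | hq
  · have hp : p ≠ 0 := by simpa using hpq
    simpa using pow_pos (abs_pos.mpr hp) 2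
  have hq2 : 0 < q ^ 2 := by positivity
  have hkq : 3 * q ^ 2 ≤ k * q ^ 2 := by gcongr
  rcases le_or_gt (p ^ 2) (q ^ 2) with hle | hlt
  · have hpq' : 0 ≤ p * q + q ^ 2 := by nlinarith [sq_nonneg (p + q)]
    constructor <;> nlinarith [mul_nonneg (by omega : (0 : ℤ) ≤ k) hpq']
  · have := h hlt
    constructor <;> nlinarith [mul_nonneg (by omega : (0 : ℤ) ≤ k) this]

lemma sq_lt_sq_sub_mul_and_neg {k p q : ℤ} (hk : 3 ≤ k) (hpq : p ≠ 0 ∨ q ≠ 0)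
    (h : q ^ 2 < p ^ 2 → p * q < 0) : q ^ 2 < (p - k * q) ^ 2 ∧ (p - k * q) * q < 0 := by
  have hq : q ≠ 0 := by
    rintro rfl
    have hp : p ≠ 0 := by simpa using hpq
    simpa using h (by positivity)
  have hq2 : 0 < q ^ 2 := by positivity
  have hkq : 3 * q ^ 2 ≤ k * q ^ 2 := by gcongr
  rcases le_or_gt (p ^ 2) (q ^ 2) with hle | hlt
  · have hpq' : 0 ≤ q ^ 2 - p * q := by nlinarith [sq_nonneg (p - q)]
    constructor <;> nlinarith [mul_nonneg (by omega : (0 : ℤ) ≤ k) hpq']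
  · have := h hlt
    constructor <;> nlinarith [mul_nonneg (by omega : (0 : ℤ) ≤ k) (neg_nonneg.mpr this.le)]

abbrev NonzeroVec : Type := nonzeroSubMulAction SL(2, ℤ) (Fin 2 → ℤ)

lemma NonzeroVec.ne_zero_or_ne_zero (v : NonzeroVec) (i : Fin 2) : v.1 i ≠ 0 ∨ v.1 i.rev ≠ 0 := by
  by_contra! h
  exact v.2 (funext fun j => by rcases fin_two_eq_or_eq_rev i j with rfl | rfl <;> simp [h])

def sameSignCone (i : Fin 2) : Set NonzeroVec :=
  {v | v.1 i.rev ^ 2 < v.1 i ^ 2 ∧ 0 ≤ v.1 i * v.1 i.rev}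

def oppositeSignCone (i : Fin 2) : Set NonzeroVec :=
  {v | v.1 i.rev ^ 2 < v.1 i ^ 2 ∧ v.1 i * v.1 i.rev < 0}

def sanovGenerator (k : ℤ) (i : Fin 2) : SL(2, ℤ) :=
  SpecialLinearGroup.transvection (fin_two_ne_rev i) k

lemma sanovGenerator_smul_apply (k : ℤ) (i : Fin 2) (v : Fin 2 → ℤ) :
    (sanovGenerator k i • v) i = v i + k * v i.rev ∧ (sanovGenerator k i • v) i.rev = v i.rev :=
  ⟨SpecialLinearGroup.transvection_smul_apply_self _ _ _,
    SpecialLinearGroup.transvection_smul_apply_of_ne _ (fin_two_ne_rev i).symm _ _⟩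

lemma sanovGenerator_inv (k : ℤ) (i : Fin 2) : (sanovGenerator k i)⁻¹ = sanovGenerator (-k) i :=
  SpecialLinearGroup.transvection_inv _ _

theorem injective_lift_sanovGenerator {k : ℤ} (hk : 3 ≤ k) :
    Function.Injective (FreeGroup.lift (sanovGenerator k)) := by
  have hdisj : ∀ i j : Fin 2, i ≠ j → ∀ v : NonzeroVec,
      v.1 i.rev ^ 2 < v.1 i ^ 2 → v.1 j.rev ^ 2 < v.1 j ^ 2 → False := by
    intro i j hij v hi hj
    obtain rfl : j = i.rev := (fin_two_eq_or_eq_rev i j).resolve_left (Ne.symm hij)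
    rw [Fin.rev_rev] at hj
    exact lt_asymm hi hj
  refine FreeGroup.injective_lift_of_ping_pong _ sameSignCone oppositeSignCone ?_ ?_ ?_ ?_ ?_ ?_
  · intro i
    refine ⟨⟨Pi.single i 1, Pi.single_ne_zero_iff.mpr (one_ne_zero (α := ℤ))⟩, ?_⟩
    simp [sameSignCone, (fin_two_ne_rev i).symm]
  · exact fun i j hij => Set.disjoint_left.mpr fun v hi hj => hdisj i j hij v hi.1 hj.1
  · exact fun i j hij => Set.disjoint_left.mpr fun v hi hj => hdisj i j hij v hi.1 hj.1
  · intro i j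
    refine Set.disjoint_left.mpr fun v hi hj => ?_
    rcases eq_or_ne i j with rfl | hij
    · exact absurd hj.2 (not_lt.mpr hi.2)
    · exact hdisj i j hij v hi.1 hj.1
  · rintro i _ ⟨v, hv, rfl⟩
    obtain ⟨h1, h2⟩ := sanovGenerator_smul_apply k i v.1
    have := sq_lt_sq_add_mul_and_nonneg hk (v.ne_zero_or_ne_zero i)
      (by simpa [oppositeSignCone] using hv)
    simpa [sameSignCone, h1, h2] using this
  · rintro i _ ⟨v, hv, rfl⟩
    obtain ⟨h1, h2⟩ := sanovGenerator_smul_apply (-k) i v.1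
    have := sq_lt_sq_sub_mul_and_neg hk (v.ne_zero_or_ne_zero i)
      (by simpa [sameSignCone] using hv)
    simpa [oppositeSignCone, sanovGenerator_inv, h1, h2, sub_eq_add_neg] using this

end Sanov

section Congruence

open CongruenceSubgroup

lemma sanovGenerator_mem_Gamma (N : ℕ) (i : Fin 2) : sanovGenerator N i ∈ Γ(N) := by
  fin_cases i <;>
    simp [sanovGenerator, SpecialLinearGroup.transvection_coe]

lemma lift_sanovGenerator_mem_Gamma (N : ℕ) (u : FreeGroup (Fin 2)) :
    FreeGroup.lift (sanovGenerator N) u ∈ Γ(N) :=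
  FreeGroup.range_lift_le (by rintro _ ⟨i, rfl⟩; exact sanovGenerator_mem_Gamma N i) ⟨u, rfl⟩

lemma eq_one_of_mem_Gamma_of_smul_eq_units_smul {N : ℕ} (hN : 2 < N) {γ : SL(2, ℤ)}
    (hγ : γ ∈ Γ(N)) (ε : ℤˣ) (h : ∀ v : Fin 2 → ℤ, γ • v = ε • v) : γ = 1 := by
  have hε : ((ε : ℤ) : ZMod N) = 1 := by
    have h00 : γ 0 0 = ε := by
      simpa [Matrix.SpecialLinearGroup.smul_def, Units.smul_def] using
        congrFun (h (Pi.single 0 1)) 0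
    rw [← h00]
    exact (Gamma_mem.mp hγ).1
  obtain rfl : ε = 1 := by
    refine (Int.units_eq_one_or ε).resolve_right fun hneg => ?_
    rw [hneg, Units.val_neg, Units.val_one, Int.cast_neg, Int.cast_one, neg_eq_iff_add_eq_zero,
      one_add_one_eq_two, ← Int.cast_two, ZMod.intCast_zmod_eq_zero_iff_dvd] at hε
    have := Nat.le_of_dvd two_pos (Int.natCast_dvd_natCast.mp hε)
    omega
  refine SpecialLinearGroup.toLin'_injective (LinearEquiv.ext fun v => ?_)
  rw [map_one]
  exact (h v).trans (one_smul _ v)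

end Congruence

section FreeCoxeter

variable {n : ℕ} {G : Type*} [Group G]

lemma x_sq (i : Fin n) : x n i ^ 2 = 1 :=
  PresentedGroup.one_of_mem ⟨i, rfl⟩

def W.lift (f : Fin n → G) (hf : ∀ i, f i ^ 2 = 1) : W n →* G :=
  PresentedGroup.toGroup (by rintro _ ⟨i, rfl⟩; simpa using hf i)

@[simp]
lemma W.lift_x (f : Fin n → G) (hf : ∀ i, f i ^ 2 = 1) (i : Fin n) : W.lift f hf (x n i) = f i :=
  PresentedGroup.toGroup.of _

lemma W.hom_ext {φ ψ : W n →* G} (h : ∀ i, φ (x n i) = ψ (x n i)) : φ = ψ :=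
  PresentedGroup.ext h

def W.sign (n : ℕ) : W n →* ℤˣ :=
  W.lift (fun _ => -1) fun _ => neg_one_sq

def partialConjHom (i : Fin n) (g : W n) : W n →* W n :=
  W.lift (Function.update (x n) i (g * x n i * g⁻¹)) fun j => by
    rcases eq_or_ne j i with rfl | h
    · simp [conj_pow, x_sq]
    · simp [h, x_sq]

@[simp]
lemma partialConjHom_x_self (i : Fin n) (g : W n) :
    partialConjHom i g (x n i) = g * x n i * g⁻¹ := by
  simp [partialConjHom]

@[simp]
lemma partialConjHom_x_of_ne {i j : Fin n} (g : W n) (h : j ≠ i) :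
    partialConjHom i g (x n j) = x n j := by
  simp [partialConjHom, h]

lemma partialConjHom_apply_of_mem_closure {i : Fin n} (g : W n) {h : W n}
    (hh : h ∈ Subgroup.closure (x n '' {i}ᶜ)) : partialConjHom i g h = h :=
  MonoidHom.eqOn_closure (g := MonoidHom.id _)
    (by rintro _ ⟨j, hj, rfl⟩; exact partialConjHom_x_of_ne g hj) hh

lemma partialConjHom_inv_comp {i : Fin n} {g : W n} (hg : g ∈ Subgroup.closure (x n '' {i}ᶜ)) :
    (partialConjHom i g⁻¹).comp (partialConjHom i g) = MonoidHom.id _ := by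
  refine W.hom_ext fun j => ?_
  rcases eq_or_ne j i with rfl | h
  · simp [partialConjHom_apply_of_mem_closure _ hg, mul_assoc]
  · simp [h]

def partialConjugation (i : Fin n) (g : W n) (hg : g ∈ Subgroup.closure (x n '' {i}ᶜ)) :
    MulAut (W n) :=
  (partialConjHom i g).toMulEquiv (partialConjHom i g⁻¹) (partialConjHom_inv_comp hg)
    (by simpa using partialConjHom_inv_comp (inv_mem hg))

end FreeCoxeter

section Intertwining

variable {A B : Type*} [Group A] [Group B]

def intertwiningPairs (ρ : A →* B) : Subgroup (MulAut A × MulAut B) where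
  carrier := {p | ∀ a, ρ (p.1 a) = p.2 (ρ a)}
  mul_mem' {p q} hp hq a := by
    change ρ (p.1 (q.1 a)) = p.2 (q.2 (ρ a))
    rw [hp, hq]
  one_mem' _ := rfl
  inv_mem' {p} hp a := p.2.injective <| by
    change p.2 (ρ (p.1⁻¹ a)) = p.2 (p.2⁻¹ (ρ a))
    rw [← hp, MulAut.apply_inv_self, MulAut.apply_inv_self]

lemma mem_intertwiningPairs_of_forall_of {ι : Type*} {ρ : A →* B} (α : FreeGroup ι →* MulAut A)
    (β : FreeGroup ι →* MulAut B)
    (h : ∀ i, (α (FreeGroup.of i), β (FreeGroup.of i)) ∈ intertwiningPairs ρ) (u : FreeGroup ι) :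
    (α u, β u) ∈ intertwiningPairs ρ := by
  have : Subgroup.closure (Set.range FreeGroup.of) ≤ (intertwiningPairs ρ).comap (α.prod β) :=
    (Subgroup.closure_le _).mpr (by rintro _ ⟨i, rfl⟩; exact h i)
  exact this (by rw [FreeGroup.closure_range_of]; trivial)

lemma commute_inv_mul_of_conj_eq {G : Type*} [Group G] {a b g : G}
    (h : MulAut.conj a g = MulAut.conj b g) : Commute (b⁻¹ * a) g := by
  have : a * g = b * g * b⁻¹ * a := by
    simpa [mul_assoc] using congrArg (· * a) h
  rw [Commute, SemiconjBy, mul_assoc, this]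
  group

end Intertwining

section ReflectionRepresentation

open AffineEquiv

variable {n : ℕ} {k V : Type*} [Ring k] [AddCommGroup V] [Module k V]

@[simps]
def LinearEquiv.toAffineEquivHom : (V ≃ₗ[k] V) →* (V ≃ᵃ[k] V) where
  toFun := LinearEquiv.toAffineEquiv
  map_one' := rfl
  map_mul' _ _ := rfl

lemma AffineEquiv.constVSub_sq (t : V) : (constVSub k t : V ≃ᵃ[k] V) ^ 2 = 1 := by
  ext v
  simp [pow_two]

lemma AffineEquiv.constVSub_mul_constVSub (s t : V) :
    (constVSub k s : V ≃ᵃ[k] V) * constVSub k t = constVAdd k V (s - t) := by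
  ext v
  simp [vadd_eq_add]
  abel

lemma AffineEquiv.constVAdd_conj_constVSub (s t : V) :
    MulAut.conj (constVAdd k V s) (constVSub k t) = constVSub k (t + 2 • s) := by
  ext v
  simp [vadd_eq_add, two_nsmul, inv_def]
  abel

lemma LinearEquiv.toAffineEquivHom_conj_constVSub (L : V ≃ₗ[k] V) (t : V) :
    MulAut.conj (LinearEquiv.toAffineEquivHom L) (constVSub k t) = constVSub k (L t) := by
  rw [MulAut.conj_apply, mul_inv_eq_iff_eq_mul]
  ext v
  simp

variable (k) in
def reflectionRep (t : Fin n → V) : W n →* (V ≃ᵃ[k] V) :=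
  W.lift (fun i => constVSub k (t i)) fun _ => constVSub_sq _

@[simp]
lemma reflectionRep_x (t : Fin n → V) (i : Fin n) :
    reflectionRep k t (x n i) = constVSub k (t i) :=
  W.lift_x _ _ i

lemma linear_reflectionRep (t : Fin n → V) (g : W n) :
    (reflectionRep k t g).linear = DistribMulAction.toModuleAut k V (W.sign n g) := by
  have : linearHom.comp (reflectionRep k t) = (DistribMulAction.toModuleAut k V).comp (W.sign n) :=
    W.hom_ext fun i => by ext v; simp [W.sign]
  exact DFunLike.congr_fun this g

lemma partialConjugation_mem_intertwiningPairs {t : Fin n → V} {i : Fin n} {g : W n}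
    (hg : g ∈ Subgroup.closure (x n '' {i}ᶜ)) {s : V} {L : V ≃ₗ[k] V}
    (hgs : reflectionRep k t g = constVAdd k V s) (hLi : L (t i) = t i + 2 • s)
    (hL : ∀ j ≠ i, L (t j) = t j) :
    (partialConjugation i g hg, MulAut.conj (LinearEquiv.toAffineEquivHom L)) ∈
      intertwiningPairs (reflectionRep k t) := by
  have : (reflectionRep k t).comp (partialConjHom i g) =
      (MulAut.conj (LinearEquiv.toAffineEquivHom L)).toMonoidHom.comp (reflectionRep k t) := by
    refine W.hom_ext fun j => ?_
    simp only [MonoidHom.comp_apply, MulEquiv.coe_toMonoidHom, reflectionRep_x,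
      LinearEquiv.toAffineEquivHom_conj_constVSub]
    rcases eq_or_ne j i with rfl | h
    · rw [partialConjHom_x_self, hLi, ← constVAdd_conj_constVSub, ← hgs, MulAut.conj_apply,
        map_mul, map_mul, map_inv, reflectionRep_x]
    · rw [partialConjHom_x_of_ne _ h, reflectionRep_x, hL j h]
  exact DFunLike.congr_fun this

lemma AffineEquiv.eq_one_of_commute_constVSub {ι : Type*} [Fintype ι] [DecidableEq ι]
    [IsAddTorsionFree k] (D : (ι → k) ≃ᵃ[k] (ι → k)) (h0 : Commute D (constVSub k 0))
    (h : ∀ i, Commute D (constVSub k (Pi.single i 1))) : D = 1 := by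
  have hD0 : D 0 = 0 := self_eq_neg.mp (by simpa using DFunLike.congr_fun h0.eq 0)
  have hDe (i : ι) : D (Pi.single i 1) = Pi.single i 1 := by
    simpa [hD0] using DFunLike.congr_fun (h i).eq 0
  have hDv (v : ι → k) : D v = D.linear v := by
    simpa [hD0] using D.map_vadd 0 v
  have hlin : D.linear = LinearEquiv.refl k _ :=
    LinearEquiv.toLinearMap_injective <| (Pi.basisFun k ι).ext fun i => by simp [← hDv, hDe]
  ext v
  simp [hDv, hlin]

end ReflectionRepresentation

section FreeSubgroup

open AffineEquiv

abbrev standardRep : W 3 →* ((Fin 2 → ℤ) ≃ᵃ[ℤ] (Fin 2 → ℤ)) :=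
  reflectionRep ℤ (Fin.cons 0 fun j => Pi.single j 1)

def sanovAutomorphism (i : Fin 2) : MulAut (W 3) :=
  partialConjugation i.rev.succ ((x 3 i.succ * x 3 0) ^ 2) <|
    have hi : i.succ ≠ i.rev.succ := (Fin.succ_injective _).ne (fin_two_ne_rev i)
    pow_mem (mul_mem (Subgroup.subset_closure (Set.mem_image_of_mem _ hi))
      (Subgroup.subset_closure (Set.mem_image_of_mem _ (Fin.succ_ne_zero _).symm))) 2

lemma sanovAutomorphism_mem_intertwiningPairs (i : Fin 2) :
    (sanovAutomorphism i, MulAut.conj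
        (LinearEquiv.toAffineEquivHom (SpecialLinearGroup.toLin' (sanovGenerator 4 i)))) ∈
      intertwiningPairs standardRep := by
  refine partialConjugation_mem_intertwiningPairs _ (s := 2 • Pi.single i 1) ?_ ?_ ?_
  · rw [map_pow, map_mul, reflectionRep_x, reflectionRep_x, constVSub_mul_constVSub,
      ← constVAdd_nsmul]
    simp
  · change sanovGenerator 4 i • (Pi.single i.rev 1 : Fin 2 → ℤ) = _
    rw [sanovGenerator, SpecialLinearGroup.transvection_smul_single_snd]
    simp only [Fin.cons_succ]
    module
  · refine Fin.cases (by simp) fun j hj => ?_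
    obtain rfl : j = i := (fin_two_eq_or_eq_rev i j).resolve_right (by simpa using hj)
    change sanovGenerator 4 j • (Pi.single j 1 : Fin 2 → ℤ) = _
    simp [sanovGenerator, SpecialLinearGroup.transvection_smul_single_fst]

theorem eq_one_of_lift_sanovAutomorphism_mem_Inn {u : FreeGroup (Fin 2)}
    (hu : FreeGroup.lift sanovAutomorphism u ∈ Inn (W 3)) : u = 1 := by
  obtain ⟨w, hw⟩ := hu
  set γ := FreeGroup.lift (sanovGenerator 4) u
  set L := LinearEquiv.toAffineEquivHom (SpecialLinearGroup.toLin' γ)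
  have hint := mem_intertwiningPairs_of_forall_of (FreeGroup.lift sanovAutomorphism)
    (MulAut.conj.comp (LinearEquiv.toAffineEquivHom.comp
      (SpecialLinearGroup.toLin'.comp (FreeGroup.lift (sanovGenerator 4)))))
    (by simpa using sanovAutomorphism_mem_intertwiningPairs) u
  have hconj (g : W 3) :
      MulAut.conj (standardRep w) (standardRep g) = MulAut.conj L (standardRep g) :=
    calc MulAut.conj (standardRep w) (standardRep g) = standardRep (MulAut.conj w g) := by simp
      _ = MulAut.conj L (standardRep g) := by rw [hw]; exact hint g
  have hLw : L = standardRep w := by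
    refine inv_mul_eq_one.mp (eq_one_of_commute_constVSub _ ?_ fun j => ?_)
    · simpa using commute_inv_mul_of_conj_eq (hconj (x 3 0))
    · simpa using commute_inv_mul_of_conj_eq (hconj (x 3 j.succ))
  have hγ (v : Fin 2 → ℤ) : γ • v = W.sign 3 w • v := by
    have := congr(($hLw).linear v)
    rwa [linear_reflectionRep] at this
  refine injective_lift_sanovGenerator (k := 4) (by norm_num) ?_
  rw [map_one]
  exact eq_one_of_mem_Gamma_of_smul_eq_units_smul (by norm_num)
    (lift_sanovGenerator_mem_Gamma 4 u) _ hγ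

end FreeSubgroup

/-- There is a subgroup of `Aut (W 3)` which is free of rank 2 and meets the inner
automorphisms trivially; in particular `Out (W 3)` contains a free subgroup of rank 2. -/
theorem exists_free_subgroup_aut :
    ∃ H : Subgroup (MulAut (W 3)),
      Nonempty (↥H ≃* FreeGroup (Fin 2)) ∧ H ⊓ Inn (W 3) = ⊥ ∧
        ∃ K : Subgroup (Out (W 3)), Nonempty (↥K ≃* FreeGroup (Fin 2)) := by
  set Φ := FreeGroup.lift sanovAutomorphism
  have hΦ : Function.Injective Φ := (injective_iff_map_eq_one Φ).mpr fun u hu =>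
    eq_one_of_lift_sanovAutomorphism_mem_Inn (hu ▸ one_mem _)
  have hΦOut : Function.Injective ((QuotientGroup.mk' (Inn (W 3))).comp Φ) :=
    (injective_iff_map_eq_one _).mpr fun u hu =>
      eq_one_of_lift_sanovAutomorphism_mem_Inn ((QuotientGroup.eq_one_iff _).mp hu)
  refine ⟨Φ.range, ⟨(MonoidHom.ofInjective hΦ).symm⟩, ?_, _, ⟨(MonoidHom.ofInjective hΦOut).symm⟩⟩
  refine (Subgroup.eq_bot_iff_forall _).mpr ?_
  rintro _ ⟨⟨u, rfl⟩, hinn⟩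
  rw [eq_one_of_lift_sanovAutomorphism_mem_Inn hinn, map_one]
end

section
/- For every n ≥ 3, every partial W_2-basis of W_n has cardinality at most ⌊n/2⌋. -/
/-- A family of subgroups is a free product decomposition of `G` if the canonical
homomorphism from their abstract free product to `G` is an isomorphism. -/
def IsFreeProductOf {G : Type*} [Group G] {ι : Type*} (H : ι → Subgroup G) : Prop :=
  Function.Bijective (Monoid.CoprodI.lift fun i => (H i).subtype)

/-- A subgroup is a free factor if it admits a free complement. -/
def IsFreeFactor {G : Type*} [Group G] (A : Subgroup G) : Prop :=
  ∃ B : Subgroup G, IsFreeProductOf (fun b : Bool => bif b then A else B)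

/-- The conjugacy class of a subgroup. -/
def conjClass {G : Type*} [Group G] (A : Subgroup G) : Set (Subgroup G) :=
  {B | ∃ g : G, B = Subgroup.map (MulAut.conj g).toMonoidHom A}

/-- A partial `W₂`-basis of `W n`: a nonempty finite set of conjugacy classes of subgroups
isomorphic to `W 2` admitting representatives `A_1, …, A_k` such that
`W n = A_1 * ⋯ * A_k * B` for some subgroup `B`. -/
def IsPartialW2Basis (n : ℕ) (S : Set (Set (Subgroup (W n)))) : Prop :=
  ∃ (k : ℕ) (A : Fin k → Subgroup (W n)) (B : Subgroup (W n)),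
    0 < k ∧
    (∀ i, Nonempty (↥(A i) ≃* W 2)) ∧
    IsFreeProductOf (fun o : Option (Fin k) => o.elim B A) ∧
    Function.Injective (fun i => conjClass (A i)) ∧
    S = Set.range fun i => conjClass (A i)

/-- A subgroup of `W n` is `X*`-paired if it is generated by conjugates of `x_{2i-1}` and
`x_{2i}` for some `i ≤ ⌊n/2⌋` (with `0`-based indexing: `x_{2i}` and `x_{2i+1}`). -/
def IsXPaired (n : ℕ) (A : Subgroup (W n)) : Prop :=
  ∃ (i : ℕ) (hi : 2 * i + 1 < n) (g h : W n),
    A = Subgroup.closure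
      {g * x n ⟨2 * i, by omega⟩ * g⁻¹, h * x n ⟨2 * i + 1, hi⟩ * h⁻¹}

/-- The poset `BP_n` of partial `W₂`-bases of `W n`, ordered by inclusion. -/
def BP (n : ℕ) : Type := {S : Set (Set (Subgroup (W n))) // IsPartialW2Basis n S}

instance (n : ℕ) : PartialOrder (BP n) :=
  inferInstanceAs (PartialOrder {S : Set (Set (Subgroup (W n))) // IsPartialW2Basis n S})

/-- The poset `BP_n^*` of partial `W₂`-bases all of whose elements are conjugacy classes
of `X*`-paired free `W₂`-factors, ordered by inclusion. -/
def BPstar (n : ℕ) : Type :=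
  {S : Set (Set (Subgroup (W n))) //
    IsPartialW2Basis n S ∧ ∀ C ∈ S, ∃ A : Subgroup (W n), IsXPaired n A ∧ C = conjClass A}

instance (n : ℕ) : PartialOrder (BPstar n) :=
  inferInstanceAs (PartialOrder {S : Set (Set (Subgroup (W n))) //
    IsPartialW2Basis n S ∧ ∀ C ∈ S, ∃ A : Subgroup (W n), IsXPaired n A ∧ C = conjClass A})

open CategoryTheory in
/-- The geometric realization of the order complex (nerve) of a poset. -/
noncomputable def orderComplex (Q : Type) [Preorder Q] : TopCat :=
  SSet.toTop.obj (nerve Q)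


/-!
Count homomorphisms to `ℤ/2`. A homomorphism out of a free product is an arbitrary family of
homomorphisms out of the factors, so a decomposition `W n = A_1 * ⋯ * A_k * B` gives
`#Hom(W n, ℤ/2) = #Hom(B, ℤ/2) * ∏ #Hom(A_i, ℤ/2)`. Since every element of `ℤ/2` squares to one,
homomorphisms out of `W m` are arbitrary maps on the generators, so this reads
`2 ^ n = #Hom(B, ℤ/2) * 4 ^ k`, and hence `2 * k ≤ n`.
-/

namespace W

variable {m : ℕ} {G : Type*} [Group G]

def monoidHomEquivOfSqEqOne (hG : ∀ g : G, g ^ 2 = 1) : (W m →* G) ≃ (Fin m → G) where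
  toFun φ i := φ (x m i)
  invFun f := PresentedGroup.toGroup (f := f) <| by
    rintro - ⟨i, rfl⟩
    rw [map_pow, FreeGroup.lift_apply_of, hG]
  left_inv φ := PresentedGroup.ext fun i => PresentedGroup.toGroup.of _
  right_inv f := funext fun i => PresentedGroup.toGroup.of _

theorem card_monoidHom_of_sq_eq_one (hG : ∀ g : G, g ^ 2 = 1) :
    Nat.card (W m →* G) = Nat.card G ^ m := by
  rw [Nat.card_congr (monoidHomEquivOfSqEqOne hG), Nat.card_fun, Nat.card_fin]

theorem card_monoidHom_zmod_two : Nat.card (W m →* Multiplicative (ZMod 2)) = 2 ^ m := by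
  rw [card_monoidHom_of_sq_eq_one (by decide), Nat.card_eq_fintype_card]
  rfl

end W

namespace IsFreeProductOf

variable {G : Type*} [Group G] {ι : Type*} {H : ι → Subgroup G}

noncomputable def monoidHomEquivPi (hH : IsFreeProductOf H) (N : Type*) [Monoid N] :
    (G →* N) ≃ ∀ i, (H i →* N) :=
  (MulEquiv.monoidHomCongrLeftEquiv (MulEquiv.ofBijective _ hH).symm).trans
    Monoid.CoprodI.lift.symm

theorem card_monoidHom [Fintype ι] (hH : IsFreeProductOf H) (N : Type*) [Monoid N] :
    Nat.card (G →* N) = ∏ i, Nat.card (H i →* N) := by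
  rw [Nat.card_congr (hH.monoidHomEquivPi N), Nat.card_pi]

end IsFreeProductOf

theorem partial_basis_card_le_general (n : ℕ)
    (S : Set (Set (Subgroup (W n)))) (hS : IsPartialW2Basis n S) :
    S.ncard ≤ n / 2 := by
  obtain ⟨k, A, B, -, hA, hfree, hinj, rfl⟩ := hS
  rw [Set.ncard_range_of_injective hinj, Nat.card_fin]
  have hcount := hfree.card_monoidHom (Multiplicative (ZMod 2))
  have hfactor (i : Fin k) : Nat.card (A i →* Multiplicative (ZMod 2)) = 2 ^ 2 := by
    rw [Nat.card_congr (MulEquiv.monoidHomCongrLeftEquiv (hA i).some),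
      W.card_monoidHom_zmod_two]
  have hprod : ∏ i, Nat.card (A i →* Multiplicative (ZMod 2)) = 2 ^ (2 * k) := by
    rw [Fintype.prod_congr _ _ hfactor, Finset.prod_const, Finset.card_fin, ← pow_mul]
  have hdvd : 2 ^ (2 * k) ∣ 2 ^ n := by
    rw [← W.card_monoidHom_zmod_two (m := n), hcount, Fintype.prod_option]
    exact dvd_mul_of_dvd_right hprod.symm.dvd _
  have : 2 * k ≤ n := (Nat.pow_dvd_pow_iff_le_right (by norm_num)).mp hdvd
  omega

/-- Every partial `W₂`-basis of `W n` has cardinality at most `⌊n/2⌋`. -/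
theorem partial_basis_card_le (n : ℕ) (hn : 3 ≤ n)
    (S : Set (Set (Subgroup (W n)))) (hS : IsPartialW2Basis n S) :
    S.ncard ≤ n / 2 :=
  partial_basis_card_le_general n S hS
end
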